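/- Let a : V → V be a bounded self-adjoint operator on a complex Hilbert space and f : V → W an isomorphism of Hilbert spaces (bounded with bounded inverse, not necessarily unitary). Then the operators a and f∘a∘f* have the same signature: the spectral projection χ_{(0,∞)}(f a f*) has range isomorphic (via f*) to the range of χ_{(0,∞)}(a), and similarly for the negative parts. In particular, when V, W carry a trace giving a dimension function, sign(a) = sign(f a f*), where sign denotes the difference of dimensions of the positive and negative spectral subspaces. -/

import Mathlib

open Module

/-- The positive spectral subspace of an endomorphism: the span of the eigenspaces
for (real) positive eigenvalues, i.e. the range of `χ_(0,∞)(a)` when `a` is a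
self-adjoint endomorphism of a finite-dimensional complex inner product space. -/
noncomputable def posSpectralSubspace {V : Type*} [NormedAddCommGroup V]
    [InnerProductSpace ℂ V] (a : V →ₗ[ℂ] V) : Submodule ℂ V :=
  ⨆ μ : ℝ, ⨆ _ : 0 < μ, Module.End.eigenspace a (μ : ℂ)

/-- The negative spectral subspace, i.e. the range of `χ_(-∞,0)(a)`. -/
noncomputable def negSpectralSubspace {V : Type*} [NormedAddCommGroup V]
    [InnerProductSpace ℂ V] (a : V →ₗ[ℂ] V) : Submodule ℂ V :=
  ⨆ μ : ℝ, ⨆ _ : μ < 0, Module.End.eigenspace a (μ : ℂ)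

/-- The signature of a self-adjoint operator: the difference of the dimensions of its
positive and negative spectral subspaces. -/
noncomputable def operatorSignature {V : Type*} [NormedAddCommGroup V]
    [InnerProductSpace ℂ V] (a : V →ₗ[ℂ] V) : ℤ :=
  (finrank ℂ (posSpectralSubspace a) : ℤ) - (finrank ℂ (negSpectralSubspace a) : ℤ)

/-!
STATEMENT 6: Let `a : V → V` be a self-adjoint operator and `f : V → W` an
isomorphism (not necessarily unitary).  Then `a` and `f ∘ a ∘ f*` have the same
signature: the positive (resp. negative) spectral subspace of `f a f*` has the
same dimension as that of `a`, so `sign (a) = sign (f a f*)`.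
-/

section Aux
variable {V : Type*} [NormedAddCommGroup V] [InnerProductSpace ℂ V] [FiniteDimensional ℂ V]

local notation "⟪" x ", " y "⟫" => @inner ℂ _ _ x y

-- quadratic form in coordinates
lemma quad_formula (a : V →ₗ[ℂ] V) (ha : a.IsSymmetric) (x : V) :
    (⟪x, a x⟫).re = ∑ i, ha.eigenvalues rfl i * ‖⟪ha.eigenvectorBasis rfl i, x⟫‖ ^ 2 := by
  set n := finrank ℂ V
  set e := ha.eigenvectorBasis rfl with he
  set l := ha.eigenvalues rfl with hl
  have h1 : ⟪x, a x⟫ = ∑ i, (starRingEnd ℂ) (e.repr x i) * ((l i : ℂ) * e.repr x i) := by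
    rw [← e.repr.inner_map_map x (a x)]
    rw [PiLp.inner_apply]
    congr 1
    ext i
    rw [ha.eigenvectorBasis_apply_self_apply rfl x i]
    simp [RCLike.inner_apply]
    exact mul_comm _ _
  rw [h1]
  rw [Complex.re_sum]
  congr 1
  ext i
  have : (starRingEnd ℂ) (e.repr x i) * ((l i : ℂ) * e.repr x i)
      = (l i : ℂ) * ((‖e.repr x i‖ : ℝ) ^ 2 : ℝ) := by
    rw [mul_comm ((starRingEnd ℂ) (e.repr x i)), mul_assoc]
    congr 1
    rw [mul_comm]
    push_cast
    exact RCLike.conj_mul (e.repr x i)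
  rw [this, e.repr_apply_apply, ← Complex.ofReal_mul, Complex.ofReal_re]

end Aux

section Aux2
variable {V : Type*} [NormedAddCommGroup V] [InnerProductSpace ℂ V] [FiniteDimensional ℂ V]
local notation "⟪" x ", " y "⟫" => @inner ℂ _ _ x y

lemma coord_zero_of_mem_pos (a : V →ₗ[ℂ] V) (ha : a.IsSymmetric) (i : Fin (finrank ℂ V))
    (hi : ha.eigenvalues rfl i ≤ 0) {x : V} (hx : x ∈ posSpectralSubspace a) :
    ⟪ha.eigenvectorBasis rfl i, x⟫ = 0 := by
  set e := ha.eigenvectorBasis rfl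
  set l := ha.eigenvalues rfl
  have key : posSpectralSubspace a ≤ LinearMap.ker (((innerSL ℂ (e i)) : V →L[ℂ] ℂ) : V →ₗ[ℂ] ℂ) := by
    apply iSup₂_le
    intro μ hμ y hy
    rw [Module.End.mem_eigenspace_iff] at hy
    rw [LinearMap.mem_ker]
    have h1 : ⟪e i, a y⟫ = (μ : ℂ) * ⟪e i, y⟫ := by rw [hy, inner_smul_right]
    have h2 : ⟪e i, a y⟫ = (l i : ℂ) * ⟪e i, y⟫ := by
      rw [← ha, ha.apply_eigenvectorBasis rfl i, inner_smul_left]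
      simp
      rfl
    have h3 : ((μ : ℂ) - (l i : ℂ)) * ⟪e i, y⟫ = 0 := by
      rw [sub_mul, ← h1, ← h2, sub_self]
    have h4 : (μ : ℂ) - (l i : ℂ) ≠ 0 := by
      rw [sub_ne_zero]
      exact_mod_cast ne_of_gt (lt_of_le_of_lt hi hμ)
    simpa [innerSL_apply_apply] using (mul_eq_zero.1 h3).resolve_left h4
  simpa [LinearMap.mem_ker, innerSL_apply_apply] using key hx

lemma pos_on_pos (a : V →ₗ[ℂ] V) (ha : a.IsSymmetric) {x : V}
    (hx : x ∈ posSpectralSubspace a) (hx0 : x ≠ 0) : 0 < (⟪x, a x⟫).re := by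
  rw [quad_formula a ha x]
  set e := ha.eigenvectorBasis rfl with he
  set l := ha.eigenvalues rfl with hl
  apply Finset.sum_pos'
  · intro i _
    by_cases h : 0 < l i
    · exact mul_nonneg h.le (sq_nonneg _)
    · rw [coord_zero_of_mem_pos a ha i (not_lt.1 h) hx]
      simp
  · have hrepr : e.repr x ≠ 0 := by
      intro h
      apply hx0
      have := congrArg e.repr.symm h
      simpa using this
    have : ∃ i, e.repr x i ≠ 0 := by
      by_contra hcon
      push_neg at hcon
      exact hrepr (by ext j; exact hcon j)
    obtain ⟨i, hi⟩ := this
    refine ⟨i, Finset.mem_univ i, ?_⟩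
    have hli : 0 < l i := by
      by_contra h
      rw [e.repr_apply_apply, coord_zero_of_mem_pos a ha i (not_lt.1 h) hx] at hi
      exact hi rfl
    have hne : ⟪e i, x⟫ ≠ 0 := by rw [← e.repr_apply_apply]; exact hi
    have : 0 < ‖⟪e i, x⟫‖ ^ 2 :=
      pow_pos (norm_pos_iff.2 hne) 2
    exact mul_pos hli this

lemma nonpos_on_orth (a : V →ₗ[ℂ] V) (ha : a.IsSymmetric) {x : V}
    (hx : x ∈ (posSpectralSubspace a)ᗮ) : (⟪x, a x⟫).re ≤ 0 := by
  rw [quad_formula a ha x]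
  set e := ha.eigenvectorBasis rfl
  set l := ha.eigenvalues rfl
  apply Finset.sum_nonpos
  intro i _
  by_cases h : 0 < l i
  · have hmem : e i ∈ posSpectralSubspace a := by
      apply Submodule.mem_iSup_of_mem (l i)
      apply Submodule.mem_iSup_of_mem h
      exact Module.End.mem_eigenspace_iff.mpr (ha.apply_eigenvectorBasis rfl i)
    rw [Submodule.mem_orthogonal] at hx
    rw [hx (e i) hmem]
    simp
  · exact mul_nonpos_iff.2 (Or.inr ⟨not_lt.1 h, sq_nonneg _⟩)

end Aux2

section Key
variable {V : Type*} [NormedAddCommGroup V] [InnerProductSpace ℂ V] [FiniteDimensional ℂ V]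
variable {W : Type*} [NormedAddCommGroup W] [InnerProductSpace ℂ W] [FiniteDimensional ℂ W]
local notation "⟪" x ", " y "⟫" => @inner ℂ _ _ x y

lemma conj_isSymmetric (a : V →ₗ[ℂ] V) (ha : a.IsSymmetric) (f : V →ₗ[ℂ] W) :
    (f ∘ₗ a ∘ₗ LinearMap.adjoint f).IsSymmetric := by
  intro x y
  simp only [LinearMap.comp_apply]
  rw [← LinearMap.adjoint_inner_right f, ← LinearMap.adjoint_inner_left f]
  exact ha _ _

lemma adjoint_injective (f : V →ₗ[ℂ] W) (hf : Function.Surjective f) :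
    Function.Injective (LinearMap.adjoint f) := by
  rw [← LinearMap.ker_eq_bot, Submodule.eq_bot_iff]
  intro y hy
  rw [LinearMap.mem_ker] at hy
  obtain ⟨x, hx⟩ := hf y
  have h2 : ⟪(LinearMap.adjoint f) y, x⟫ = ⟪y, y⟫ := by
    rw [LinearMap.adjoint_inner_left, hx]
  have : ⟪y, y⟫ = 0 := by rw [← h2, hy, inner_zero_left]
  exact inner_self_eq_zero.1 this

lemma key_le (a : V →ₗ[ℂ] V) (ha : a.IsSymmetric) (f : V →ₗ[ℂ] W)
    (hf : Function.Bijective f) :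
    finrank ℂ (posSpectralSubspace (f ∘ₗ a ∘ₗ LinearMap.adjoint f)) ≤
      finrank ℂ (posSpectralSubspace a) := by
  set b := f ∘ₗ a ∘ₗ LinearMap.adjoint f with hb
  have hbsym := conj_isSymmetric a ha f
  have hinj := adjoint_injective f hf.2
  set g : W ≃ₗ[ℂ] V := LinearEquiv.ofBijective (LinearMap.adjoint f)
    ⟨hinj, by
      rw [← LinearMap.range_eq_top]
      have := LinearMap.finrank_range_add_finrank_ker (LinearMap.adjoint f)
      rw [LinearMap.ker_eq_bot.2 hinj, finrank_bot, add_zero] at this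
      -- surjectivity needs dim W = dim V
      have hdim : finrank ℂ W = finrank ℂ V :=
        (LinearEquiv.ofBijective f hf).finrank_eq.symm
      exact Submodule.eq_top_of_finrank_eq (by rw [this, hdim])⟩ with hg
  set S := Submodule.map (g : W →ₗ[ℂ] V) (posSpectralSubspace b) with hS
  have hdimS : finrank ℂ S = finrank ℂ (posSpectralSubspace b) :=
    LinearEquiv.finrank_map_eq g _
  have hdisj : S ⊓ (posSpectralSubspace a)ᗮ = ⊥ := by
    rw [Submodule.eq_bot_iff]
    rintro x ⟨hxS, hxO⟩
    by_contra hx0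
    obtain ⟨y, hy, rfl⟩ := hxS
    have hy0 : y ≠ 0 := by rintro rfl; exact hx0 (by simp)
    have hgy : (g y : V) = LinearMap.adjoint f y := rfl
    have hpos : 0 < (⟪y, b y⟫).re := pos_on_pos b hbsym hy hy0
    have heq : ⟪y, b y⟫ = ⟪g y, a (g y)⟫ := by
      rw [hgy]
      simp only [hb, LinearMap.comp_apply]
      rw [LinearMap.adjoint_inner_left f]
    rw [heq] at hpos
    exact absurd (nonpos_on_orth a ha hxO) (not_le.2 hpos)
  have h1 : finrank ℂ S + finrank ℂ ((posSpectralSubspace a)ᗮ) ≤ finrank ℂ V := by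
    have h2 := Submodule.finrank_sup_add_finrank_inf_eq S ((posSpectralSubspace a)ᗮ)
    rw [hdisj, finrank_bot, add_zero] at h2
    rw [← h2]
    exact Submodule.finrank_le _
  have h3 := Submodule.finrank_add_finrank_orthogonal (posSpectralSubspace a)
  omega

lemma key_eq (a : V →ₗ[ℂ] V) (ha : a.IsSymmetric) (f : V →ₗ[ℂ] W)
    (hf : Function.Bijective f) :
    finrank ℂ (posSpectralSubspace (f ∘ₗ a ∘ₗ LinearMap.adjoint f)) =
      finrank ℂ (posSpectralSubspace a) := by
  set b := f ∘ₗ a ∘ₗ LinearMap.adjoint f with hb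
  have hbsym := conj_isSymmetric a ha f
  set e : V ≃ₗ[ℂ] W := LinearEquiv.ofBijective f hf with he
  set g : W →ₗ[ℂ] V := e.symm.toLinearMap with hg
  have hgf : g ∘ₗ f = LinearMap.id := by
    ext x
    simp [hg, he]
  have hga : g ∘ₗ b ∘ₗ LinearMap.adjoint g = a := by
    have h1 : LinearMap.adjoint f ∘ₗ LinearMap.adjoint g = LinearMap.id := by
      rw [← LinearMap.adjoint_comp, hgf]
      have hid : (LinearMap.id : V →ₗ[ℂ] V) = LinearMap.adjoint LinearMap.id := by
        rw [LinearMap.eq_adjoint_iff]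
        intro x y
        simp
      rw [← hid]
    calc g ∘ₗ b ∘ₗ LinearMap.adjoint g
        = (g ∘ₗ f) ∘ₗ a ∘ₗ (LinearMap.adjoint f ∘ₗ LinearMap.adjoint g) := by
          simp only [hb, LinearMap.comp_assoc]
      _ = a := by rw [hgf, h1]; simp
  have hle1 := key_le a ha f hf
  have hle2 := key_le b hbsym g (e.symm.bijective)
  rw [hga] at hle2
  rw [hb] at hle2 ⊢
  omega

end Key

section NegPart
variable {V : Type*} [NormedAddCommGroup V] [InnerProductSpace ℂ V]

lemma eigenspace_neg' (a : V →ₗ[ℂ] V) (μ : ℂ) :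
    Module.End.eigenspace (-a) μ = Module.End.eigenspace a (-μ) := by
  ext x
  rw [Module.End.mem_eigenspace_iff, Module.End.mem_eigenspace_iff]
  constructor
  · intro h
    have := congrArg Neg.neg h
    simpa [neg_smul] using this
  · intro h
    show -(a x) = μ • x
    rw [h]
    simp [neg_smul]

lemma negSpectral_eq_posSpectral_neg (a : V →ₗ[ℂ] V) :
    negSpectralSubspace a = posSpectralSubspace (-a) := by
  apply le_antisymm
  · apply iSup₂_le
    intro μ hμ
    have h : Module.End.eigenspace a (μ : ℂ) = Module.End.eigenspace (-a) ((-μ : ℝ) : ℂ) := by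
      rw [eigenspace_neg']
      push_cast
      rw [neg_neg]
    rw [h]
    exact le_iSup₂ (f := fun (ν : ℝ) (_ : 0 < ν) => Module.End.eigenspace (-a) ((ν : ℝ) : ℂ)) (-μ)
      (neg_pos.2 hμ)
  · apply iSup₂_le
    intro μ hμ
    have h : Module.End.eigenspace (-a) (μ : ℂ) = Module.End.eigenspace a ((-μ : ℝ) : ℂ) := by
      rw [eigenspace_neg']
      push_cast
      ring_nf
    rw [h]
    exact le_iSup₂ (f := fun (ν : ℝ) (_ : ν < 0) => Module.End.eigenspace a ((ν : ℝ) : ℂ)) (-μ)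
      (neg_neg_iff_pos.2 hμ)

end NegPart

theorem signature_congruence_invariant'
    {V W : Type*} [NormedAddCommGroup V] [InnerProductSpace ℂ V] [FiniteDimensional ℂ V]
    [NormedAddCommGroup W] [InnerProductSpace ℂ W] [FiniteDimensional ℂ W]
    (a : V →ₗ[ℂ] V) (ha : a.IsSymmetric)
    (f : V →ₗ[ℂ] W) (hf : Function.Bijective f) :
    finrank ℂ (posSpectralSubspace (f ∘ₗ a ∘ₗ LinearMap.adjoint f)) =
        finrank ℂ (posSpectralSubspace a) ∧
    finrank ℂ (negSpectralSubspace (f ∘ₗ a ∘ₗ LinearMap.adjoint f)) =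
        finrank ℂ (negSpectralSubspace a) ∧
    (finrank ℂ (posSpectralSubspace (f ∘ₗ a ∘ₗ LinearMap.adjoint f)) : ℤ) -
        (finrank ℂ (negSpectralSubspace (f ∘ₗ a ∘ₗ LinearMap.adjoint f)) : ℤ) =
      (finrank ℂ (posSpectralSubspace a) : ℤ) - (finrank ℂ (negSpectralSubspace a) : ℤ) := by
  have hpos := key_eq a ha f hf
  have haneg : (-a).IsSymmetric := by
    intro x y
    simp only [LinearMap.neg_apply, inner_neg_left, inner_neg_right, ha x y]
  have hcomp : f ∘ₗ (-a) ∘ₗ LinearMap.adjoint f = -(f ∘ₗ a ∘ₗ LinearMap.adjoint f) := by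
    ext x
    simp
  have hneg : finrank ℂ (negSpectralSubspace (f ∘ₗ a ∘ₗ LinearMap.adjoint f)) =
      finrank ℂ (negSpectralSubspace a) := by
    rw [negSpectral_eq_posSpectral_neg, negSpectral_eq_posSpectral_neg, ← hcomp]
    exact key_eq (-a) haneg f hf
  exact ⟨hpos, hneg, by omega⟩

theorem signature_congruence_invariant
    {V W : Type*} [NormedAddCommGroup V] [InnerProductSpace ℂ V] [FiniteDimensional ℂ V]
    [NormedAddCommGroup W] [InnerProductSpace ℂ W] [FiniteDimensional ℂ W]
    (a : V →ₗ[ℂ] V) (ha : a.IsSymmetric)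
    (f : V →ₗ[ℂ] W) (hf : Function.Bijective f) :
    finrank ℂ (posSpectralSubspace (f ∘ₗ a ∘ₗ LinearMap.adjoint f)) =
        finrank ℂ (posSpectralSubspace a) ∧
    finrank ℂ (negSpectralSubspace (f ∘ₗ a ∘ₗ LinearMap.adjoint f)) =
        finrank ℂ (negSpectralSubspace a) ∧
    operatorSignature (f ∘ₗ a ∘ₗ LinearMap.adjoint f) = operatorSignature a := by
  obtain ⟨h1, h2, h3⟩ := signature_congruence_invariant' a ha f hf
  exact ⟨h1, h2, by simp only [operatorSignature, h1, h2]⟩
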